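/- arXiv:2409.15737 — 2 statements merged into one kernel-verified Lean document; each statement's English description precedes it below -/
import Mathlib

section
/- Let T > 0, let u : [0,T] → ℝ be continuous, and let x : [0,T] × [−1,1] → ℝ be continuous, differentiable in t with jointly continuous derivative ∂_t x, and satisfying ∂_t x(t,β) = β·x(t,β) + u(t) for all t ∈ [0,T] and β ∈ [−1,1]. For k ∈ ℕ define the k-th moment m_k(t) = ∫_{−1}^{1} T_k(β)·x(t,β) dβ. Then each m_k is differentiable on [0,T], and for every k ≥ 1, m_k′(t) = (1/2)(m_{k−1}(t) + m_{k+1}(t)) + b_k·u(t), where b_k = ∫_{−1}^{1} T_k(β) dβ; moreover m_0′(t) = m_1(t) + 2u(t). -/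
/-!
Each moment is `t ↦ ∫ p(β) x(t,β) dβ` for a polynomial `p`. Writing `x(t,β) = x(0,β) + ∫₀ᵗ ∂ₛx(s,β) ds`
and exchanging the two integrals (Fubini on a rectangle, the integrand being continuous) shows that
it is differentiable with derivative `∫ p(β) (β x(t,β) + u(t)) dβ`. The multiplication by `β` is
then resolved by the Chebyshev recurrence `2 X Tₖ = Tₖ₋₁ + Tₖ₊₁`.
-/

open Set Polynomial MeasureTheory
open Function (uncurry)
open scoped Interval

section ParametricIntegral

variable {E : Type*} [NormedAddCommGroup E] [NormedSpace ℝ E]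

theorem continuousOn_intervalIntegral_of_continuousOn_prod {X : Type*} [TopologicalSpace X]
    [FirstCountableTopology X] {g : X → ℝ → E} {s : Set X} {c d : ℝ} (hs : IsCompact s)
    (hcd : c ≤ d)
    (hg : ContinuousOn (uncurry g) (s ×ˢ Icc c d)) :
    ContinuousOn (fun t => ∫ β in c..d, g t β) s := by
  obtain ⟨C, hC⟩ := (hs.prod isCompact_Icc).exists_bound_of_continuousOn hg
  have hIoc : Ι c d ⊆ Icc c d := by rw [uIoc_of_le hcd]; exact Ioc_subset_Icc_self
  intro t ht
  refine intervalIntegral.continuousWithinAt_of_dominated_interval (bound := fun _ => C)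
    ?_ ?_ intervalIntegrable_const ?_
  · filter_upwards [self_mem_nhdsWithin] with t' ht'
    exact ((hg.comp (by fun_prop) fun β hβ => mk_mem_prod ht' hβ).mono hIoc).aestronglyMeasurable
      measurableSet_uIoc
  · filter_upwards [self_mem_nhdsWithin] with t' ht'
    exact ae_of_all _ fun β hβ => hC (t', β) (mk_mem_prod ht' (hIoc hβ))
  · exact ae_of_all _ fun β hβ =>
      (hg.comp (by fun_prop) fun t' ht' => mk_mem_prod ht' (hIoc hβ)) t ht

theorem intervalIntegral_integral_swap_of_continuousOn {f : ℝ → ℝ → E} {a b c d : ℝ}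
    (hab : a ≤ b) (hcd : c ≤ d) (hf : ContinuousOn (uncurry f) (Icc a b ×ˢ Icc c d)) :
    ∫ s in a..b, ∫ β in c..d, f s β = ∫ β in c..d, ∫ s in a..b, f s β := by
  simp only [intervalIntegral.integral_of_le hab, intervalIntegral.integral_of_le hcd]
  refine integral_integral_swap ?_
  rw [Measure.prod_restrict]
  exact (hf.integrableOn_compact (isCompact_Icc.prod isCompact_Icc)).mono_set
    (prod_mono Ioc_subset_Icc_self Ioc_subset_Icc_self)

variable [CompleteSpace E]

theorem hasDerivWithinAt_intervalIntegral_of_continuousOn {f f' : ℝ → ℝ → E} {a b c d t : ℝ}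
    (hcd : c ≤ d) (hf : ContinuousOn (uncurry f) (Icc a b ×ˢ Icc c d))
    (hf' : ContinuousOn (uncurry f') (Icc a b ×ˢ Icc c d))
    (hderiv : ∀ β ∈ Icc c d, ∀ s ∈ Icc a b, HasDerivWithinAt (f · β) (f' s β) (Icc a b) s)
    (ht : t ∈ Icc a b) :
    HasDerivWithinAt (fun s => ∫ β in c..d, f s β) (∫ β in c..d, f' t β) (Icc a b) t := by
  have ha : a ∈ Icc a b := left_mem_Icc.2 (ht.1.trans ht.2)
  have hF' : ContinuousOn (fun s => ∫ β in c..d, f' s β) (Icc a b) :=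
    continuousOn_intervalIntegral_of_continuousOn_prod isCompact_Icc hcd hf'
  have hslice : ∀ s ∈ Icc a b, IntervalIntegrable (f s) volume c d := fun s hs =>
    (hf.comp (by fun_prop) fun β hβ => mk_mem_prod hs hβ).intervalIntegrable_of_Icc hcd
  have hrepr : ∀ s ∈ Icc a b,
      ∫ β in c..d, f s β = (∫ β in c..d, f a β) + ∫ σ in a..s, ∫ β in c..d, f' σ β := by
    intro s hs
    have hsub : Icc a s ⊆ Icc a b := Icc_subset_Icc_right hs.2
    have hFTC : ∀ β ∈ Icc c d, ∫ σ in a..s, f' σ β = f s β - f a β := fun β hβ =>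
      intervalIntegral.integral_eq_sub_of_hasDeriv_right_of_le hs.1
        (fun σ hσ => (hderiv β hβ σ (hsub hσ)).continuousWithinAt.mono hsub)
        (fun σ hσ => ((hderiv β hβ σ (hsub (Ioo_subset_Icc_self hσ))).hasDerivAt
          (Icc_mem_nhds hσ.1 (hσ.2.trans_le hs.2))).hasDerivWithinAt)
        ((hf'.comp (by fun_prop) fun σ hσ => mk_mem_prod (hsub hσ) hβ).intervalIntegrable_of_Icc
          hs.1)
    rw [intervalIntegral_integral_swap_of_continuousOn hs.1 hcd (hf'.mono (prod_mono hsub le_rfl)),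
      intervalIntegral.integral_congr (fun β hβ => hFTC β (uIcc_of_le hcd ▸ hβ)),
      intervalIntegral.integral_sub (hslice s hs) (hslice a ha), add_sub_cancel]
  have : Fact (t ∈ Icc a b) := ⟨ht⟩
  refine ((intervalIntegral.integral_hasDerivWithinAt_right
    ((hF'.mono (Icc_subset_Icc_right ht.2)).intervalIntegrable_of_Icc ht.1)
    (hF'.stronglyMeasurableAtFilter_nhdsWithin measurableSet_Icc t) (hF' t ht)).const_add
    _).congr (fun s hs => hrepr s hs) (hrepr t ht)

end ParametricIntegral

section LinearSystem

variable {a b c d t : ℝ} {u : ℝ → ℝ} {x : ℝ → ℝ → ℝ}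

theorem hasDerivWithinAt_polynomial_moment (p : ℝ[X]) (hcd : c ≤ d)
    (hu : ContinuousOn u (Icc a b)) (hx : ContinuousOn (uncurry x) (Icc a b ×ˢ Icc c d))
    (hode : ∀ β ∈ Icc c d, ∀ s ∈ Icc a b,
      HasDerivWithinAt (x · β) (β * x s β + u s) (Icc a b) s)
    (ht : t ∈ Icc a b) :
    HasDerivWithinAt (fun s => ∫ β in c..d, p.eval β * x s β)
      ((∫ β in c..d, (X * p).eval β * x t β) + (∫ β in c..d, p.eval β) * u t) (Icc a b) t := by
  have hp : Continuous fun q : ℝ × ℝ => p.eval q.2 := p.continuous.comp continuous_snd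
  have hrhs : ContinuousOn (fun q : ℝ × ℝ => q.2 * x q.1 q.2 + u q.1) (Icc a b ×ˢ Icc c d) :=
    (continuous_snd.continuousOn.mul hx).add (hu.comp continuous_fst.continuousOn fun _ hq => hq.1)
  have hxt : IntervalIntegrable (x t) volume c d :=
    (hx.comp (by fun_prop) fun β hβ => mk_mem_prod ht hβ).intervalIntegrable_of_Icc hcd
  refine (hasDerivWithinAt_intervalIntegral_of_continuousOn
    (f := fun s β => p.eval β * x s β) (f' := fun s β => p.eval β * (β * x s β + u s)) hcd
    (hp.continuousOn.mul hx) (hp.continuousOn.mul hrhs)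
    (fun β hβ s hs => (hode β hβ s hs).const_mul (p.eval β)) ht).congr_deriv ?_
  rw [← intervalIntegral.integral_mul_const, ← intervalIntegral.integral_add
    (hxt.continuousOn_mul (X * p).continuousOn) (p.continuousOn.intervalIntegrable.mul_const _)]
  simp only [eval_mul, eval_X]
  congr 1 with β
  ring

theorem integral_eval_X_mul_T_mul {g : ℝ → ℝ} (hg : IntervalIntegrable g volume c d) (n : ℤ) :
    ∫ β in c..d, (X * Chebyshev.T ℝ n).eval β * g β =
      (1 / 2) * ((∫ β in c..d, (Chebyshev.T ℝ (n - 1)).eval β * g β) +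
        ∫ β in c..d, (Chebyshev.T ℝ (n + 1)).eval β * g β) := by
  have hrec : ∀ β : ℝ, (X * Chebyshev.T ℝ n).eval β =
      (1 / 2) * ((Chebyshev.T ℝ (n - 1)).eval β + (Chebyshev.T ℝ (n + 1)).eval β) := by
    intro β
    have := congrArg (eval β) (Chebyshev.T_add_one ℝ n)
    simp only [eval_sub, eval_mul, eval_ofNat, eval_X] at this ⊢
    linarith
  rw [← intervalIntegral.integral_add (hg.continuousOn_mul (Chebyshev.T ℝ _).continuousOn)
    (hg.continuousOn_mul (Chebyshev.T ℝ _).continuousOn), ← intervalIntegral.integral_const_mul]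
  congr 1 with β
  rw [hrec]
  ring

end LinearSystem

theorem stmt_9_general (T : ℝ) (u : ℝ → ℝ) (hu : ContinuousOn u (Set.Icc 0 T))
    (x : ℝ → ℝ → ℝ)
    (hxcont : ContinuousOn (fun p : ℝ × ℝ => x p.1 p.2)
      (Set.Icc 0 T ×ˢ Set.Icc (-1 : ℝ) 1))
    (hode : ∀ β ∈ Set.Icc (-1 : ℝ) 1, ∀ t ∈ Set.Icc (0 : ℝ) T,
      HasDerivWithinAt (fun s => x s β) (β * x t β + u t) (Set.Icc 0 T) t)
    (m : ℕ → ℝ → ℝ) (b : ℕ → ℝ)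
    (hm : ∀ (k : ℕ) (t : ℝ),
      m k t = ∫ β in (-1 : ℝ)..1, (Polynomial.Chebyshev.T ℝ (k : ℤ)).eval β * x t β)
    (hb : ∀ k : ℕ, b k = ∫ β in (-1 : ℝ)..1, (Polynomial.Chebyshev.T ℝ (k : ℤ)).eval β) :
    (∀ k : ℕ, DifferentiableOn ℝ (m k) (Set.Icc 0 T)) ∧
    (∀ t ∈ Set.Icc (0 : ℝ) T,
      (∀ k : ℕ, 1 ≤ k →
        HasDerivWithinAt (m k) ((1 / 2) * (m (k - 1) t + m (k + 1) t) + b k * u t)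
          (Set.Icc 0 T) t) ∧
      HasDerivWithinAt (m 0) (m 1 t + 2 * u t) (Set.Icc 0 T) t) := by
  have hderiv : ∀ k : ℕ, ∀ t ∈ Icc 0 T, HasDerivWithinAt (m k)
      ((∫ β in (-1 : ℝ)..1, (X * Polynomial.Chebyshev.T ℝ k).eval β * x t β) + b k * u t)
      (Icc 0 T) t := by
    intro k t ht
    rw [funext (hm k), hb k]
    exact hasDerivWithinAt_polynomial_moment _ (by norm_num) hu hxcont hode ht
  refine ⟨fun k t ht => (hderiv k t ht).differentiableWithinAt, fun t ht => ⟨fun k hk => ?_, ?_⟩⟩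
  · have hx_slice : IntervalIntegrable (x t) volume (-1) 1 :=
      (hxcont.comp (by fun_prop) fun β hβ => mk_mem_prod ht hβ).intervalIntegrable_of_Icc
        (by norm_num)
    convert hderiv k t ht using 2
    rw [integral_eval_X_mul_T_mul hx_slice, hm, hm]
    push_cast [hk]
    rfl
  · convert hderiv 0 t ht using 1
    norm_num [hm, hb]

/-- Chebyshev moment dynamics of the parameterized scalar linear system
`∂_t x(t,β) = β x(t,β) + u(t)`, `β ∈ [−1,1]`. With `m_k(t) = ∫_{−1}^1 T_k(β) x(t,β) dβ`
and `b_k = ∫_{−1}^1 T_k(β) dβ`, each `m_k` is differentiable on `[0,T]`, with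
`m_k′(t) = (1/2)(m_{k−1}(t) + m_{k+1}(t)) + b_k u(t)` for `k ≥ 1`, and
`m_0′(t) = m_1(t) + 2 u(t)`. -/
theorem stmt_9 (T : ℝ) (hT : 0 < T) (u : ℝ → ℝ) (hu : ContinuousOn u (Set.Icc 0 T))
    (x : ℝ → ℝ → ℝ)
    (hxcont : ContinuousOn (fun p : ℝ × ℝ => x p.1 p.2)
      (Set.Icc 0 T ×ˢ Set.Icc (-1 : ℝ) 1))
    (hode : ∀ β ∈ Set.Icc (-1 : ℝ) 1, ∀ t ∈ Set.Icc (0 : ℝ) T,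
      HasDerivWithinAt (fun s => x s β) (β * x t β + u t) (Set.Icc 0 T) t)
    (m : ℕ → ℝ → ℝ) (b : ℕ → ℝ)
    (hm : ∀ (k : ℕ) (t : ℝ),
      m k t = ∫ β in (-1 : ℝ)..1, (Polynomial.Chebyshev.T ℝ (k : ℤ)).eval β * x t β)
    (hb : ∀ k : ℕ, b k = ∫ β in (-1 : ℝ)..1, (Polynomial.Chebyshev.T ℝ (k : ℤ)).eval β) :
    (∀ k : ℕ, DifferentiableOn ℝ (m k) (Set.Icc 0 T)) ∧
    (∀ t ∈ Set.Icc (0 : ℝ) T,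
      (∀ k : ℕ, 1 ≤ k →
        HasDerivWithinAt (m k) ((1 / 2) * (m (k - 1) t + m (k + 1) t) + b k * u t)
          (Set.Icc 0 T) t) ∧
      HasDerivWithinAt (m 0) (m 1 t + 2 * u t) (Set.Icc 0 T) t) :=
  stmt_9_general T u hu x hxcont hode m b hm hb
end

section
/- Let Ω_x be the 3×3 real matrix with (2,3)-entry 1, (3,2)-entry −1, and all other entries 0, and let Ω_y be the 3×3 real matrix with (1,3)-entry −1, (3,1)-entry 1, and all other entries 0. Let 0 < δ < 1, T > 0, let u, v : [0,T] → ℝ be continuous, and let x : [0,T] × [1−δ, 1+δ] → ℝ³ be continuous, differentiable in t with jointly continuous derivative ∂_t x, and satisfying the Bloch equation ∂_t x(t,β) = β·(u(t)·Ω_y + v(t)·Ω_x)·x(t,β) for all t ∈ [0,T] and β ∈ [1−δ, 1+δ]. For k ∈ ℕ define the k-th moment m_k(t) = δ·∫_{−1}^{1} T_k(η)·x(t, 1+δη) dη ∈ ℝ³. Then each m_k is differentiable on [0,T], and for every k ≥ 1, m_k′(t) = (u(t)·Ω_y + v(t)·Ω_x)·( (δ/2)(m_{k−1}(t) + m_{k+1}(t))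 + m_k(t) ). -/
/-!
Writing `β = 1 + δη`, the moment `m_k` is `δ ∫ T_k(η) x(t, 1 + δη) dη`. Differentiating under
the integral sign (each slice is recovered from its derivative by the fundamental theorem of
calculus, and Fubini turns the integrated slices into a primitive in `t`) and using the Bloch
equation gives `m_k' = A(t) (δ ∫ (1 + δη) T_k(η) x dη)` with `A = u Ω_y + v Ω_x`. The three-term
recurrence `2η T_k = T_{k+1} + T_{k-1}` rewrites the weight `(1 + δη) T_k` as
`T_k + (δ/2)(T_{k+1} + T_{k-1})`, and linearity of the integral finishes the proof.
-/

open Set Polynomial Matrix MeasureTheory intervalIntegral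

namespace intervalIntegral

variable {E : Type*} [NormedAddCommGroup E] [NormedSpace ℝ E]

theorem continuousOn_parametric_intervalIntegral_of_continuousOn {F : ℝ → ℝ → E}
    {a b c d : ℝ} (hcd : c ≤ d) (hF : ContinuousOn (Function.uncurry F) (Icc a b ×ˢ Icc c d)) :
    ContinuousOn (fun t => ∫ η in c..d, F t η) (Icc a b) := by
  rcases lt_or_ge b a with hba | hab
  · simp [Icc_eq_empty_of_lt hba]
  -- Clamping both variables makes the integrand continuous on the whole plane
  -- without changing it on the rectangle.
  set G : ℝ → ℝ → E := fun t η => F (projIcc a b hab t) (projIcc c d hcd η)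
  have hG : Continuous (Function.uncurry G) :=
    hF.comp_continuous ((continuous_subtype_val.comp (continuous_projIcc (h := hab))).prodMap
      (continuous_subtype_val.comp (continuous_projIcc (h := hcd))))
      fun p => ⟨(projIcc a b hab p.1).2, (projIcc c d hcd p.2).2⟩
  refine (continuous_parametric_intervalIntegral_of_continuous' hG c d).continuousOn.congr
    fun t ht => integral_congr fun η hη => ?_
  rw [uIcc_of_le hcd] at hη
  simp [G, projIcc_of_mem hab ht, projIcc_of_mem hcd hη]

theorem integral_eq_sub_of_hasDerivWithinAt_Icc [CompleteSpace E] {g g' : ℝ → E} {a b : ℝ}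
    (hab : a ≤ b) (hderiv : ∀ r ∈ Icc a b, HasDerivWithinAt g (g' r) (Icc a b) r)
    (hg' : IntervalIntegrable g' volume a b) : ∫ r in a..b, g' r = g b - g a :=
  integral_eq_sub_of_hasDeriv_right_of_le hab (fun r hr => (hderiv r hr).continuousWithinAt)
    (fun r hr => ((hderiv r (Ioo_subset_Icc_self hr)).hasDerivAt
      (Icc_mem_nhds hr.1 hr.2)).hasDerivWithinAt) hg'

theorem hasDerivWithinAt_parametric_intervalIntegral [CompleteSpace E] {f f' : ℝ → ℝ → E}
    {a b c d t : ℝ} (hcd : c ≤ d) (hf : ContinuousOn (Function.uncurry f) (Icc a b ×ˢ Icc c d))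
    (hf' : ContinuousOn (Function.uncurry f') (Icc a b ×ˢ Icc c d))
    (hderiv : ∀ s ∈ Icc a b, ∀ η ∈ Icc c d, HasDerivWithinAt (f · η) (f' s η) (Icc a b) s)
    (ht : t ∈ Icc a b) :
    HasDerivWithinAt (fun s => ∫ η in c..d, f s η) (∫ η in c..d, f' t η) (Icc a b) t := by
  have hab : a ≤ b := ht.1.trans ht.2
  have hprimitive : ∀ s ∈ Icc a b, ∫ η in c..d, f s η
      = (∫ η in c..d, f a η) + ∫ r in a..s, ∫ η in c..d, f' r η := by
    intro s hs
    have hFTC : ∀ η ∈ Icc c d, f s η - f a η = ∫ r in a..s, f' r η := by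
      intro η hη
      refine (integral_eq_sub_of_hasDerivWithinAt_Icc hs.1
        (fun r hr => (hderiv r ⟨hr.1, hr.2.trans hs.2⟩ η hη).mono (Icc_subset_Icc_right hs.2))
        ?_).symm
      exact ((hf'.uncurry_right η hη).mono (Icc_subset_Icc_right hs.2)).intervalIntegrable_of_Icc
        hs.1
    have hswap := intervalIntegral_intervalIntegral_swap (a := a) (b := s) (c := c) (d := d)
      (F := f') ((hf'.integrableOn_compact (isCompact_Icc.prod isCompact_Icc)).mono_set
        (prod_mono ((uIoc_of_le hs.1).trans_subset (Ioc_subset_Icc_self.trans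
          (Icc_subset_Icc_right hs.2)))
          ((uIoc_of_le hcd).trans_subset Ioc_subset_Icc_self)))
    rw [hswap, ← integral_congr fun η hη => hFTC η (by rwa [uIcc_of_le hcd] at hη),
      integral_sub ((hf.uncurry_left s hs).intervalIntegrable_of_Icc hcd)
        ((hf.uncurry_left a (left_mem_Icc.2 hab)).intervalIntegrable_of_Icc hcd)]
    abel
  have hΦ : ContinuousOn (fun s => ∫ η in c..d, f' s η) (Icc a b) :=
    continuousOn_parametric_intervalIntegral_of_continuousOn hcd hf'
  have : Fact (t ∈ Icc a b) := ⟨ht⟩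
  have hprim := integral_hasDerivWithinAt_right (a := a) (s := Icc a b) (t := Icc a b)
    ((hΦ.mono (uIcc_subset_Icc ⟨le_rfl, hab⟩ ht)).intervalIntegrable)
    (hΦ.stronglyMeasurableAtFilter_nhdsWithin measurableSet_Icc t) (hΦ t ht)
  exact (hprim.const_add (∫ η in c..d, f a η)).congr hprimitive (hprimitive t ht)

end intervalIntegral

theorem Polynomial.Chebyshev.one_add_mul_mul_eval_T (a η : ℝ) (n : ℤ) :
    (1 + a * η) * (T ℝ n).eval η
      = (T ℝ n).eval η + a / 2 * ((T ℝ (n + 1)).eval η + (T ℝ (n - 1)).eval η) := by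
  have h := congrArg (eval η) (Chebyshev.T_add_one ℝ n)
  simp only [eval_sub, eval_mul, eval_ofNat, eval_X] at h
  linear_combination (-a / 2) * h

theorem intervalIntegral.integral_one_add_mul_mul_eval_T_smul {E : Type*} [NormedAddCommGroup E]
    [NormedSpace ℝ E] {g : ℝ → E} {c d : ℝ} (hg : IntervalIntegrable g volume c d) (a : ℝ)
    (n : ℤ) :
    ∫ η in c..d, ((1 + a * η) * (Chebyshev.T ℝ n).eval η) • g η
      = (∫ η in c..d, (Chebyshev.T ℝ n).eval η • g η)
        + (a / 2) • ((∫ η in c..d, (Chebyshev.T ℝ (n + 1)).eval η • g η)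
          + ∫ η in c..d, (Chebyshev.T ℝ (n - 1)).eval η • g η) := by
  have hT (j : ℤ) : IntervalIntegrable (fun η => (Chebyshev.T ℝ j).eval η • g η) volume c d :=
    hg.continuousOn_smul (Polynomial.continuous _).continuousOn
  simp_rw [Chebyshev.one_add_mul_mul_eval_T, add_smul, mul_smul, add_smul]
  rw [integral_add (hT n), integral_smul, integral_add (hT _) (hT _)]
  exact ((hT _).add (hT _)).smul (a / 2)

theorem Matrix.mulVec_intervalIntegral {m n : Type*} [Fintype m] [Fintype n]
    (A : Matrix m n ℝ) {g : ℝ → n → ℝ} {a b : ℝ} (hg : IntervalIntegrable g volume a b) :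
    A *ᵥ ∫ x in a..b, g x = ∫ x in a..b, A *ᵥ g x :=
  ((mulVecLin A).toContinuousLinearMap.intervalIntegral_comp_comm hg).symm

theorem one_add_mul_mem_Icc {δ η : ℝ} (hδ : 0 ≤ δ) (hη : η ∈ Icc (-1) 1) :
    1 + δ * η ∈ Icc (1 - δ) (1 + δ) := by
  constructor <;> nlinarith [hη.1, hη.2]

theorem continuousOn_rescaled {ι : Type*} {x : ℝ → ℝ → ι → ℝ} {a b δ : ℝ} (hδ : 0 ≤ δ)
    (hx : ContinuousOn (Function.uncurry x) (Icc a b ×ˢ Icc (1 - δ) (1 + δ))) :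
    ContinuousOn (Function.uncurry fun s η => x s (1 + δ * η)) (Icc a b ×ˢ Icc (-1) 1) :=
  hx.comp (f := fun p : ℝ × ℝ => (p.1, 1 + δ * p.2)) (by fun_prop)
    fun _ hp => ⟨hp.1, one_add_mul_mem_Icc hδ hp.2⟩

theorem hasDerivWithinAt_rescaled_moment {ι : Type*} [Fintype ι] {A : ℝ → Matrix ι ι ℝ}
    {x : ℝ → ℝ → ι → ℝ} {w : ℝ → ℝ} {a b δ t : ℝ} (hδ : 0 ≤ δ) (hA : ContinuousOn A (Icc a b))
    (hx : ContinuousOn (Function.uncurry x) (Icc a b ×ˢ Icc (1 - δ) (1 + δ))) (hw : Continuous w)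
    (hode : ∀ β ∈ Icc (1 - δ) (1 + δ), ∀ s ∈ Icc a b,
      HasDerivWithinAt (x · β) (β • (A s *ᵥ x s β)) (Icc a b) s)
    (ht : t ∈ Icc a b) :
    HasDerivWithinAt (fun s => δ • ∫ η in (-1 : ℝ)..1, w η • x s (1 + δ * η))
      (A t *ᵥ (δ • ∫ η in (-1 : ℝ)..1, ((1 + δ * η) * w η) • x t (1 + δ * η))) (Icc a b) t := by
  have hxr := continuousOn_rescaled hδ hx
  have hslice : IntervalIntegrable (fun η => ((1 + δ * η) * w η) • x t (1 + δ * η)) volume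
      (-1) 1 :=
    ((by fun_prop : Continuous fun η : ℝ => (1 + δ * η) * w η).continuousOn.smul
      (hxr.uncurry_left t ht)).intervalIntegrable_of_Icc (by norm_num)
  rw [mulVec_smul, mulVec_intervalIntegral _ hslice]
  refine (hasDerivWithinAt_parametric_intervalIntegral
    (f := fun s η => w η • x s (1 + δ * η))
    (f' := fun s η => A s *ᵥ (((1 + δ * η) * w η) • x s (1 + δ * η))) (by norm_num)
    ((hw.comp continuous_snd).continuousOn.smul hxr) ?_ (fun s hs η hη => ?_) ht).const_smul δ
  · exact (continuous_fst.matrix_mulVec continuous_snd).comp_continuousOn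
      ((hA.comp continuousOn_fst fun p hp => hp.1).prodMk
        ((by fun_prop : Continuous fun p : ℝ × ℝ => (1 + δ * p.2) * w p.2).continuousOn.smul hxr))
  · refine ((hode _ (one_add_mul_mem_Icc hδ hη) s hs).const_smul (w η)).congr_deriv ?_
    rw [mulVec_smul, smul_smul, mul_comm]

theorem stmt_10_general (Ox Oy : Matrix (Fin 3) (Fin 3) ℝ)
    (δ : ℝ) (hδ0 : 0 < δ) (T : ℝ)
    (u v : ℝ → ℝ) (hu : ContinuousOn u (Set.Icc 0 T)) (hv : ContinuousOn v (Set.Icc 0 T))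
    (x : ℝ → ℝ → Fin 3 → ℝ)
    (hxcont : ContinuousOn (fun p : ℝ × ℝ => x p.1 p.2)
      (Set.Icc 0 T ×ˢ Set.Icc (1 - δ) (1 + δ)))
    (hode : ∀ β ∈ Set.Icc (1 - δ) (1 + δ), ∀ t ∈ Set.Icc (0 : ℝ) T,
      HasDerivWithinAt (fun s => x s β)
        (β • ((u t • Oy + v t • Ox) *ᵥ x t β)) (Set.Icc 0 T) t)
    (m : ℕ → ℝ → Fin 3 → ℝ)
    (hm : ∀ (k : ℕ) (t : ℝ),
      m k t = δ • ∫ η in (-1 : ℝ)..1,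
        (Polynomial.Chebyshev.T ℝ (k : ℤ)).eval η • x t (1 + δ * η)) :
    (∀ k : ℕ, DifferentiableOn ℝ (m k) (Set.Icc 0 T)) ∧
    (∀ t ∈ Set.Icc (0 : ℝ) T, ∀ k : ℕ, 1 ≤ k →
      HasDerivWithinAt (m k)
        ((u t • Oy + v t • Ox) *ᵥ ((δ / 2) • (m (k - 1) t + m (k + 1) t) + m k t))
        (Set.Icc 0 T) t) := by
  have hA : ContinuousOn (fun t => u t • Oy + v t • Ox) (Icc 0 T) :=
    (hu.smul continuousOn_const).add (hv.smul continuousOn_const)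
  have hderiv (k : ℕ) (t : ℝ) (ht : t ∈ Icc 0 T) := funext (hm k) ▸
    hasDerivWithinAt_rescaled_moment hδ0.le hA hxcont (Polynomial.continuous (Chebyshev.T ℝ k))
      hode ht
  refine ⟨fun k t ht => (hderiv k t ht).differentiableWithinAt, fun t ht k hk => ?_⟩
  convert hderiv k t ht using 2
  have hslice : IntervalIntegrable (fun η => x t (1 + δ * η)) volume (-1) 1 :=
    ((continuousOn_rescaled hδ0.le hxcont).uncurry_left t ht).intervalIntegrable_of_Icc
      (by norm_num)
  rw [integral_one_add_mul_mul_eval_T_smul hslice, hm, hm, hm]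
  push_cast [Nat.cast_sub hk]
  module

/-- Chebyshev moment dynamics of the parameterized Bloch equation
`∂_t x(t,β) = β (u(t) Ω_y + v(t) Ω_x) x(t,β)`, `β ∈ [1−δ, 1+δ]`. With the rescaled moments
`m_k(t) = δ ∫_{−1}^1 T_k(η) x(t, 1+δη) dη`, each `m_k` is differentiable on `[0,T]` and,
for `k ≥ 1`, `m_k′(t) = (u(t) Ω_y + v(t) Ω_x) ((δ/2)(m_{k−1}(t) + m_{k+1}(t)) + m_k(t))`. -/
theorem stmt_10 (Ox Oy : Matrix (Fin 3) (Fin 3) ℝ)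
    (hOx : Ox = !![0, 0, 0; 0, 0, 1; 0, -1, 0])
    (hOy : Oy = !![0, 0, -1; 0, 0, 0; 1, 0, 0])
    (δ : ℝ) (hδ0 : 0 < δ) (hδ1 : δ < 1) (T : ℝ) (hT : 0 < T)
    (u v : ℝ → ℝ) (hu : ContinuousOn u (Set.Icc 0 T)) (hv : ContinuousOn v (Set.Icc 0 T))
    (x : ℝ → ℝ → Fin 3 → ℝ)
    (hxcont : ContinuousOn (fun p : ℝ × ℝ => x p.1 p.2)
      (Set.Icc 0 T ×ˢ Set.Icc (1 - δ) (1 + δ)))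
    (hode : ∀ β ∈ Set.Icc (1 - δ) (1 + δ), ∀ t ∈ Set.Icc (0 : ℝ) T,
      HasDerivWithinAt (fun s => x s β)
        (β • ((u t • Oy + v t • Ox) *ᵥ x t β)) (Set.Icc 0 T) t)
    (m : ℕ → ℝ → Fin 3 → ℝ)
    (hm : ∀ (k : ℕ) (t : ℝ),
      m k t = δ • ∫ η in (-1 : ℝ)..1,
        (Polynomial.Chebyshev.T ℝ (k : ℤ)).eval η • x t (1 + δ * η)) :
    (∀ k : ℕ, DifferentiableOn ℝ (m k) (Set.Icc 0 T)) ∧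
    (∀ t ∈ Set.Icc (0 : ℝ) T, ∀ k : ℕ, 1 ≤ k →
      HasDerivWithinAt (m k)
        ((u t • Oy + v t • Ox) *ᵥ ((δ / 2) • (m (k - 1) t + m (k + 1) t) + m k t))
        (Set.Icc 0 T) t) :=
  stmt_10_general Ox Oy δ hδ0 T u v hu hv x hxcont hode m hm
end
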